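/- Let n be a nonnegative integer with n not divisible by 4, and let h_n be the n-th Hermite function. Then Z h_n(0,0) = 0, where Z is the Zak transform. -/

import Mathlib

/-!
By Poisson summation, `Z f(0,0) = Σ_k f(k) = Σ_k f̂(k) = Z f̂(0,0)` whenever `f` and `f̂` decay
like `|x|⁻²`. Up to a constant, `h_n` is the `n`-th power of the creation operator
`A g = g' - 2πx g` applied to the Gaussian `e^{-πt²}`; the Gaussian is its own Fourier
transform, and `F g = c g` implies `F (A g) = -i c A g`, so `F h_n = (-i)ⁿ h_n`. Hence
`Z h_n(0,0) = (-i)ⁿ Z h_n(0,0)`, which forces `Z h_n(0,0) = 0` unless `4 ∣ n`.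
-/

open MeasureTheory Complex
open scoped Real

/-- The Zak transform `Zf(x,ω) = Σ_{k∈ℤ} f(k-x) e^{2πiωk}`. -/
noncomputable def Zak (f : ℝ → ℂ) (x ω : ℝ) : ℂ :=
  ∑' k : ℤ, f ((k : ℝ) - x) * Complex.exp (2 * π * Complex.I * ω * (k : ℝ))

/-- The Wiener space `W₀(ℝ)` of continuous functions with summable sequence of local sup
norms (hence bounded). -/
def MemWienerSpace (f : ℝ → ℂ) : Prop :=
  Continuous f ∧ Summable (fun k : ℤ => ⨆ t : Set.Icc (k : ℝ) ((k : ℝ) + 1), ‖f t‖)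

/-- The `n`-th Hermite function
`h_n(t) = (-1)^n C_n e^{πt²} (d/dt)^n e^{-2πt²}`, `C_n = 2^{1/4} / √((2π)^n 2^n n!)`. -/
noncomputable def hermiteFun (n : ℕ) (t : ℝ) : ℂ :=
  (((-1 : ℝ) ^ n * (2 ^ ((1 : ℝ) / 4) / Real.sqrt ((2 * π) ^ n * 2 ^ n * n.factorial)) *
      Real.exp (π * t ^ 2) *
      iteratedDeriv n (fun s : ℝ => Real.exp (-(2 * π * s ^ 2))) t : ℝ) : ℂ)

open Filter Asymptotics FourierTransform

lemma zak_zero_zero (f : ℝ → ℂ) : Zak f 0 0 = ∑' k : ℤ, f k := by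
  simp [Zak]

lemma zak_const_mul (c : ℂ) (f : ℝ → ℂ) (x ω : ℝ) :
    Zak (fun t => c * f t) x ω = c * Zak f x ω := by
  simp only [Zak, mul_assoc, tsum_mul_left]

theorem zak_fourier_zero_zero {f : ℝ → ℂ} (hc : Continuous f) {b : ℝ} (hb : 1 < b)
    (hf : f =O[cocompact ℝ] (|·| ^ (-b))) (hFf : 𝓕 f =O[cocompact ℝ] (|·| ^ (-b))) :
    Zak (𝓕 f) 0 0 = Zak f 0 0 := by
  simpa [zak_zero_zero] using (Real.tsum_eq_tsum_fourier_of_rpow_decay hc hb hf hFf 0).symm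

theorem zak_zero_zero_eq_zero_of_fourier_eq_mul {f : ℝ → ℂ} (hc : Continuous f) {b : ℝ}
    (hb : 1 < b) (hf : f =O[cocompact ℝ] (|·| ^ (-b))) {c : ℂ} (hc1 : c ≠ 1)
    (hF : 𝓕 f = fun ξ => c * f ξ) : Zak f 0 0 = 0 := by
  have hPoisson := zak_fourier_zero_zero hc hb hf (hF ▸ hf.const_mul_left c)
  rw [hF, zak_const_mul, ← sub_eq_zero, ← sub_one_mul] at hPoisson
  exact (mul_eq_zero.1 hPoisson).resolve_left (sub_ne_zero.2 hc1)

lemma fourier_sub_of_integrable {f g : ℝ → ℂ} (hf : Integrable f) (hg : Integrable g)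
    (ξ : ℝ) :
    𝓕 (fun x => f x - g x) ξ = 𝓕 f ξ - 𝓕 g ξ := by
  simp_rw [Real.fourier_eq, smul_sub]
  exact integral_sub ((Real.fourierIntegral_convergent_iff ξ).2 hf)
    ((Real.fourierIntegral_convergent_iff ξ).2 hg)

lemma fourier_const_mul (c : ℂ) (f : ℝ → ℂ) (ξ : ℝ) :
    𝓕 (fun x => c * f x) ξ = c * 𝓕 f ξ := by
  simp_rw [Real.fourier_eq, Circle.smul_def, smul_eq_mul, ← integral_const_mul, mul_left_comm]

noncomputable def creationOp (g : ℝ → ℂ) (x : ℝ) : ℂ :=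
  deriv g x - 2 * π * x * g x

theorem fourier_creationOp {g : ℝ → ℂ} (hg : Integrable g) (hg_diff : Differentiable ℝ g)
    (hg' : Integrable (deriv g)) (hxg : Integrable fun x : ℝ => x • g x) (ξ : ℝ) :
    𝓕 (creationOp g) ξ = 2 * π * I * ξ * 𝓕 g ξ - I * deriv (𝓕 g) ξ := by
  have hmul : (fun x : ℝ => 2 * π * x * g x) = fun x => (2 * π : ℂ) * (x • g x) := by
    ext x; rw [Complex.real_smul]; ring
  have hderiv : deriv (𝓕 g) ξ = -I * 𝓕 (fun x : ℝ => 2 * π * x * g x) ξ := by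
    rw [Real.deriv_fourier hg hxg, ← fourier_const_mul]
    exact congrArg (fun h : ℝ → ℂ => 𝓕 h ξ) (funext fun x => by rw [smul_eq_mul]; ring)
  unfold creationOp
  rw [fourier_sub_of_integrable hg' (hmul ▸ hxg.const_mul _), Real.fourier_deriv hg hg_diff hg',
    hderiv]
  simp only [smul_eq_mul]
  linear_combination -𝓕 (fun x : ℝ => 2 * π * x * g x) ξ * I_mul_I

theorem fourier_creationOp_of_fourier_eq {g : ℝ → ℂ} (hg : Integrable g)
    (hg_diff : Differentiable ℝ g) (hg' : Integrable (deriv g))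
    (hxg : Integrable fun x : ℝ => x • g x) {c : ℂ} (hF : 𝓕 g = fun ξ => c * g ξ) :
    𝓕 (creationOp g) = fun ξ => (-I * c) * creationOp g ξ := by
  ext ξ
  rw [fourier_creationOp hg hg_diff hg' hxg, hF, deriv_const_mul c (hg_diff ξ), creationOp]
  ring

section PolyGaussian

open Polynomial

noncomputable def polyGaussian (p : ℝ[X]) (t : ℝ) : ℂ :=
  ((p.eval t * Real.exp (-(π * t ^ 2)) : ℝ) : ℂ)

lemma polyGaussian_eq (p : ℝ[X]) (t : ℝ) :
    polyGaussian p t = ((p.eval t : ℝ) : ℂ) * cexp (-π * t ^ 2) := by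
  simp [polyGaussian]

lemma polyGaussian_add (p q : ℝ[X]) :
    polyGaussian (p + q) = fun t => polyGaussian p t + polyGaussian q t := by
  ext t; simp [polyGaussian_eq, add_mul]

lemma polyGaussian_monomial (k : ℕ) (a : ℝ) :
    polyGaussian (monomial k a) =
      fun t : ℝ => (a : ℂ) * ((t : ℂ) ^ k * cexp (-π * t ^ 2)) := by
  ext t; simp [polyGaussian_eq, mul_assoc]

lemma polyGaussian_isBigO (p : ℝ[X]) :
    polyGaussian p =O[cocompact ℝ] (|·| ^ (-2 : ℝ)) := by
  induction p using Polynomial.induction_on' with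
  | add p q hp hq => rw [polyGaussian_add]; exact hp.add hq
  | monomial k a =>
    rw [polyGaussian_monomial]
    refine IsBigO.const_mul_left ?_ _
    have hpow : (fun t : ℝ => (t : ℂ) ^ k) =O[cocompact ℝ] (|·| ^ (k : ℝ)) :=
      isBigO_of_le _ fun t => by simp [Real.rpow_natCast]
    have hexp := (isLittleO_exp_neg_mul_sq_cocompact (a := π) (by simp [Real.pi_pos])
      (-(k + 2))).isBigO
    refine (hpow.mul hexp).congr_right fun t => ?_
    rw [← Real.rpow_add' (abs_nonneg t) (by linarith)]
    ring_nf

lemma integrable_polyGaussian (p : ℝ[X]) : Integrable (polyGaussian p) := by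
  induction p using Polynomial.induction_on' with
  | add p q hp hq => rw [polyGaussian_add]; exact hp.add hq
  | monomial k a =>
    have h : Integrable fun t : ℝ => t ^ k * Real.exp (-π * t ^ 2) := by
      simpa [Real.rpow_natCast] using
        integrable_rpow_mul_exp_neg_mul_sq Real.pi_pos (s := k)
          (by linarith [k.cast_nonneg (α := ℝ)])
    refine (h.ofReal.const_mul (a : ℂ)).congr (ae_of_all _ fun t => ?_)
    simp [polyGaussian_eq, mul_assoc]

lemma continuous_polyGaussian (p : ℝ[X]) : Continuous (polyGaussian p) := by
  unfold polyGaussian; fun_prop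

lemma hasDerivAt_exp_neg_mul_sq (c t : ℝ) :
    HasDerivAt (fun s : ℝ => Real.exp (-(c * s ^ 2)))
      (-(2 * c * t) * Real.exp (-(c * t ^ 2))) t := by
  have h : HasDerivAt (fun s : ℝ => -(c * s ^ 2)) (-(2 * c * t)) t := by
    simpa [mul_comm, mul_assoc, mul_left_comm] using ((hasDerivAt_pow 2 t).const_mul c).fun_neg
  simpa [mul_comm] using h.exp

lemma hasDerivAt_polyGaussian (p : ℝ[X]) (t : ℝ) :
    HasDerivAt (polyGaussian p) (polyGaussian (derivative p - C (2 * π) * X * p) t) t := by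
  refine ((p.hasDerivAt t).fun_mul (hasDerivAt_exp_neg_mul_sq π t)).ofReal_comp.congr_deriv ?_
  simp only [polyGaussian, eval_sub, eval_mul, eval_C, eval_X]
  push_cast
  ring

lemma deriv_polyGaussian (p : ℝ[X]) :
    deriv (polyGaussian p) = polyGaussian (derivative p - C (2 * π) * X * p) :=
  funext fun t => (hasDerivAt_polyGaussian p t).deriv

lemma smul_polyGaussian (p : ℝ[X]) :
    (fun t : ℝ => t • polyGaussian p t) = polyGaussian (X * p) := by
  ext t; simp [polyGaussian_eq, mul_assoc]

theorem fourier_creationOp_polyGaussian {p : ℝ[X]} {c : ℂ}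
    (hF : 𝓕 (polyGaussian p) = fun ξ => c * polyGaussian p ξ) :
    𝓕 (creationOp (polyGaussian p)) = fun ξ => (-I * c) * creationOp (polyGaussian p) ξ := by
  refine fourier_creationOp_of_fourier_eq (integrable_polyGaussian p)
    (fun t => (hasDerivAt_polyGaussian p t).differentiableAt) ?_ ?_ hF
  · rw [deriv_polyGaussian]; exact integrable_polyGaussian _
  · rw [smul_polyGaussian]; exact integrable_polyGaussian _

noncomputable def gaussianDerivPoly : ℕ → ℝ[X]
  | 0 => 1
  | n + 1 => derivative (gaussianDerivPoly n) - C (4 * π) * X * gaussianDerivPoly n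

lemma iteratedDeriv_exp_neg_two_pi_mul_sq (n : ℕ) :
    iteratedDeriv n (fun s : ℝ => Real.exp (-(2 * π * s ^ 2)))
      = fun t => (gaussianDerivPoly n).eval t * Real.exp (-(2 * π * t ^ 2)) := by
  induction n with
  | zero => simp [gaussianDerivPoly]
  | succ n ih =>
    ext t
    have h := ((gaussianDerivPoly n).hasDerivAt t).fun_mul (hasDerivAt_exp_neg_mul_sq (2 * π) t)
    rw [iteratedDeriv_succ, ih, h.deriv, gaussianDerivPoly]
    simp only [eval_sub, eval_mul, eval_C, eval_X]
    ring

lemma hermiteFun_eq_const_mul_polyGaussian (n : ℕ) :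
    ∃ c : ℂ, hermiteFun n = fun t => c * polyGaussian (gaussianDerivPoly n) t := by
  refine ⟨(((-1 : ℝ) ^ n * (2 ^ ((1 : ℝ) / 4) /
    Real.sqrt ((2 * π) ^ n * 2 ^ n * n.factorial)) : ℝ) : ℂ), funext fun t => ?_⟩
  have hexp : Real.exp (π * t ^ 2) * Real.exp (-(2 * π * t ^ 2)) = Real.exp (-(π * t ^ 2)) := by
    rw [← Real.exp_add]; ring_nf
  rw [hermiteFun, iteratedDeriv_exp_neg_two_pi_mul_sq, polyGaussian, ← Complex.ofReal_mul,
    ← hexp]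
  ring_nf

lemma polyGaussian_gaussianDerivPoly_succ (n : ℕ) :
    polyGaussian (gaussianDerivPoly (n + 1)) = creationOp (polyGaussian (gaussianDerivPoly n)) := by
  ext t
  rw [creationOp, deriv_polyGaussian, gaussianDerivPoly]
  simp only [polyGaussian_eq, eval_sub, eval_mul, eval_C, eval_X]
  push_cast
  ring

theorem fourier_polyGaussian_gaussianDerivPoly (n : ℕ) :
    𝓕 (polyGaussian (gaussianDerivPoly n)) =
      fun ξ => (-I) ^ n * polyGaussian (gaussianDerivPoly n) ξ := by
  induction n with
  | zero =>
    have h0 : polyGaussian (gaussianDerivPoly 0) = fun x : ℝ => cexp (-π * 1 * x ^ 2) := by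
      ext x; simp [gaussianDerivPoly, polyGaussian_eq]
    rw [h0, fourier_gaussian_pi (by simp)]
    simp
  | succ n ih =>
    rw [polyGaussian_gaussianDerivPoly_succ, fourier_creationOp_polyGaussian ih, pow_succ]
    ext ξ; ring

end PolyGaussian

/-- For `n` not divisible by `4`, the Zak transform of the `n`-th Hermite function vanishes
at the origin: `Z h_n(0,0) = 0`. -/
theorem zak_hermite_zero_at_origin (n : ℕ) (hn : ¬ (4 ∣ n)) :
    Zak (hermiteFun n) 0 0 = 0 := by
  obtain ⟨c, hc⟩ := hermiteFun_eq_const_mul_polyGaussian n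
  rw [hc, zak_const_mul, zak_zero_zero_eq_zero_of_fourier_eq_mul
    (continuous_polyGaussian _) one_lt_two (polyGaussian_isBigO _)
    (mt (Complex.isPrimitiveRoot_neg_I.pow_eq_one_iff_dvd n).1 hn)
    (fourier_polyGaussian_gaussianDerivPoly n), mul_zero]
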